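/- Let f : ℝ × ℝⁿ → ℝⁿ be continuous, M₀ symmetric positive definite, δ₀ < Δ₀. Suppose max over x ∈ B_{M₀}(x₀, Δ₀) and s ∈ [0, h] of ‖h·f(t₀−s, x)‖_{M₀} ≤ Δ₀ − δ₀. Then for every x̄ ∈ B_{M₀}(x₀, δ₀), any backward solution χ of ẋ = f(t,x) with χ(t₀) = x̄ satisfies χ(t) ∈ B_{M₀}(x₀, Δ₀) for all t ∈ [t₀−h, t₀]. -/

import Mathlib

open Matrix Set

noncomputable def specNorm {n : ℕ} (B : Matrix (Fin n) (Fin n) ℝ) : ℝ :=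
  ‖Matrix.toEuclideanCLM (𝕜 := ℝ) B‖

noncomputable def specNormC {n : ℕ} (B : Matrix (Fin n) (Fin n) ℂ) : ℝ :=
  ‖Matrix.toEuclideanCLM (𝕜 := ℂ) B‖

noncomputable def wnorm {n : ℕ} (M : Matrix (Fin n) (Fin n) ℝ) (x : Fin n → ℝ) : ℝ :=
  Real.sqrt (dotProduct x (M.mulVec x))

noncomputable def euclNorm {n : ℕ} (x : Fin n → ℝ) : ℝ :=
  Real.sqrt (dotProduct x x)

/-! Writing `M₀ = Bᵀ B` turns `‖·‖_{M₀}` into the Euclidean norm of `B x`, and the substitution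
`s = t₀ - t` turns the backward problem into a forward one on `[0, h]`. Forward in time, a linear
barrier rising from `δ₀` to `Δ₀` on `[0, t]`, `t < h`, is steeper than the speed bound
`(Δ₀ - δ₀) / h`, so it cannot be reached while the solution is still in the `Δ₀`-ball; the endpoint
`t = h` then follows from the mean value inequality. -/

open scoped MatrixOrder in
theorem Matrix.PosSemidef.exists_wnorm_eq_norm {n : ℕ} {M : Matrix (Fin n) (Fin n) ℝ}
    (hM : M.PosSemidef) :
    ∃ L : (Fin n → ℝ) →L[ℝ] EuclideanSpace ℝ (Fin n), ∀ x, wnorm M x = ‖L x‖ := by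
  obtain ⟨B, rfl⟩ := CStarAlgebra.nonneg_iff_eq_star_mul_self.mp hM.nonneg
  refine ⟨(EuclideanSpace.equiv (Fin n) ℝ).symm.toContinuousLinearMap ∘L
    LinearMap.toContinuousLinearMap B.mulVecLin, fun x => ?_⟩
  rw [EuclideanSpace.norm_eq, wnorm, ← mulVec_mulVec, dotProduct_mulVec, star_eq_conjTranspose,
    vecMul_conjTranspose]
  simp [dotProduct, sq]

section Barrier

variable {E : Type*} [NormedAddCommGroup E] [NormedSpace ℝ E] {f f' : ℝ → E} {a b δ Δ : ℝ}

theorem norm_le_of_norm_deriv_right_le_of_norm_le_Ico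
    (hf : ContinuousOn f (Icc a b)) (hf' : ∀ x ∈ Ico a b, HasDerivWithinAt f (f' x) (Ici x) x)
    (hδΔ : δ < Δ) (ha : ‖f a‖ ≤ δ)
    (bound : ∀ x ∈ Ico a b, ‖f x‖ ≤ Δ → (b - a) * ‖f' x‖ ≤ Δ - δ) :
    ∀ t ∈ Ico a b, ‖f t‖ ≤ Δ := by
  intro t ⟨hat, htb⟩
  rcases hat.eq_or_lt with rfl | hat
  · linarith
  set c := (Δ - δ) / (t - a)
  have hbarrier := image_norm_le_of_norm_deriv_right_lt_deriv_boundary (a := a) (b := t)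
    (B := fun s => δ + c * (s - a)) (B' := fun _ => c)
    (hf.mono (Icc_subset_Icc_right htb.le))
    (fun x hx => hf' x ⟨hx.1, hx.2.trans htb⟩) (by simpa using ha)
    (fun x => by simpa using ((hasDerivAt_id x).sub_const a).const_mul c |>.const_add δ)
    (fun x hx hfx => by
      have hc : c * (x - a) < Δ - δ := by
        rw [div_mul_eq_mul_div, div_lt_iff₀ (by linarith)]
        exact mul_lt_mul_of_pos_left (by linarith [hx.2]) (by linarith)
      calc ‖f' x‖ ≤ (Δ - δ) / (b - a) := by
              rw [le_div_iff₀ (by linarith), mul_comm]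
              exact bound x ⟨hx.1, hx.2.trans htb⟩ (by linarith)
        _ < c := div_lt_div_of_pos_left (by linarith) (by linarith) (by linarith))
    ⟨hat.le, le_rfl⟩
  have hct : c * (t - a) = Δ - δ := div_mul_cancel₀ _ (by linarith)
  simpa [hct] using hbarrier

theorem norm_le_of_norm_deriv_right_le_of_norm_le
    (hf : ContinuousOn f (Icc a b)) (hf' : ∀ x ∈ Ico a b, HasDerivWithinAt f (f' x) (Ici x) x)
    (hδΔ : δ < Δ) (ha : ‖f a‖ ≤ δ)
    (bound : ∀ x ∈ Ico a b, ‖f x‖ ≤ Δ → (b - a) * ‖f' x‖ ≤ Δ - δ) :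
    ∀ t ∈ Icc a b, ‖f t‖ ≤ Δ := by
  intro t ht
  rcases ht.1.eq_or_lt with rfl | hat
  · linarith
  have hba : 0 < b - a := by linarith [ht.2]
  have hIco := norm_le_of_norm_deriv_right_le_of_norm_le_Ico hf hf' hδΔ ha bound
  have hmvt := norm_image_sub_le_of_norm_deriv_right_le_segment (C := (Δ - δ) / (b - a)) hf hf'
    (fun x hx => by rw [le_div_iff₀ hba, mul_comm]; exact bound x hx (hIco x hx)) t ht
  have hC : (Δ - δ) / (b - a) * (t - a) ≤ Δ - δ := by
    rw [div_mul_eq_mul_div, div_le_iff₀ hba]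
    exact mul_le_mul_of_nonneg_left (by linarith [ht.2]) (by linarith)
  calc ‖f t‖ ≤ ‖f a‖ + ‖f t - f a‖ := norm_le_insert' _ _
    _ ≤ Δ := by linarith

end Barrier

theorem stmt7_general {n : ℕ} (f : ℝ → (Fin n → ℝ) → (Fin n → ℝ))
    (M₀ : Matrix (Fin n) (Fin n) ℝ) (hM₀ : M₀.PosDef)
    (x₀ xb : Fin n → ℝ) (t₀ h δ₀ Δ₀ : ℝ)
    (hh : 0 < h) (hδΔ : δ₀ < Δ₀)
    (hbound : ∀ x, wnorm M₀ (x - x₀) ≤ Δ₀ →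
      ∀ s ∈ Icc (0 : ℝ) h, wnorm M₀ (h • f (t₀ - s) x) ≤ Δ₀ - δ₀)
    (hxb : wnorm M₀ (xb - x₀) ≤ δ₀)
    (χ : ℝ → (Fin n → ℝ)) (hχ₀ : χ t₀ = xb)
    (hχ : ∀ t ∈ Icc (t₀ - h) t₀, HasDerivAt χ (f t (χ t)) t) :
    ∀ t ∈ Icc (t₀ - h) t₀, wnorm M₀ (χ t - x₀) ≤ Δ₀ := by
  intro t ht
  obtain ⟨L, hL⟩ := hM₀.posSemidef.exists_wnorm_eq_norm
  have hreversed : ∀ s ∈ Icc 0 h, HasDerivAt (fun s => L (χ (t₀ - s) - x₀))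
      (-L (f (t₀ - s) (χ (t₀ - s)))) s := by
    intro s hs
    simpa only [Function.comp_def, map_neg] using L.hasFDerivAt.comp_hasDerivAt s
      (((hχ (t₀ - s) ⟨by linarith [hs.2], by linarith [hs.1]⟩).comp_const_sub t₀ s).sub_const x₀)
  have hforward := norm_le_of_norm_deriv_right_le_of_norm_le (a := 0) (b := h)
    (fun s hs => (hreversed s hs).continuousAt.continuousWithinAt)
    (fun s hs => (hreversed s (Ico_subset_Icc_self hs)).hasDerivWithinAt)
    hδΔ (by simpa [hχ₀, hL] using hxb)
    (fun s hs hs' => by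
      rw [sub_zero, norm_neg, ← abs_of_pos hh, ← Real.norm_eq_abs, ← norm_smul, ← map_smul, ← hL]
      exact hbound _ (by rwa [hL]) s (Ico_subset_Icc_self hs))
    (t₀ - t) ⟨by linarith [ht.2], by linarith [ht.1]⟩
  simpa [hL] using hforward

/-- Corollary 1 (backwards in time): with the bound on ‖h·f(t₀-s,x)‖_{M₀}, every backward
solution with χ(t₀) = x̄ ∈ B_{M₀}(x₀,δ₀) stays in B_{M₀}(x₀,Δ₀) on [t₀-h,t₀]. -/
theorem stmt7 {n : ℕ} (f : ℝ → (Fin n → ℝ) → (Fin n → ℝ))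
    (hf : Continuous fun p : ℝ × (Fin n → ℝ) => f p.1 p.2)
    (M₀ : Matrix (Fin n) (Fin n) ℝ) (hM₀ : M₀.PosDef)
    (x₀ xb : Fin n → ℝ) (t₀ h δ₀ Δ₀ : ℝ)
    (hh : 0 < h) (hδ₀ : 0 ≤ δ₀) (hδΔ : δ₀ < Δ₀)
    (hbound : ∀ x, wnorm M₀ (x - x₀) ≤ Δ₀ →
      ∀ s ∈ Icc (0 : ℝ) h, wnorm M₀ (h • f (t₀ - s) x) ≤ Δ₀ - δ₀)
    (hxb : wnorm M₀ (xb - x₀) ≤ δ₀)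
    (χ : ℝ → (Fin n → ℝ)) (hχ₀ : χ t₀ = xb)
    (hχ : ∀ t ∈ Icc (t₀ - h) t₀, HasDerivAt χ (f t (χ t)) t) :
    ∀ t ∈ Icc (t₀ - h) t₀, wnorm M₀ (χ t - x₀) ≤ Δ₀ :=
  stmt7_general f M₀ hM₀ x₀ xb t₀ h δ₀ Δ₀ hh hδΔ hbound hxb χ hχ₀ hχ
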